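/- For n = 2m+1 with m ∈ ℕ, define for each δ ∈ {0,1}^n the number ε_δ := #{(j,k) : 1 ≤ j < k ≤ n, δ_j = 0, δ_k = 1} mod 2. Then the sum over all δ ∈ {0,1}^n of (-1)^{ε_δ} equals 2^{m+1}. -/
import Mathlib


open Finset

private def NN {n : ℕ} (δ : Fin n → Bool) : ℕ :=
  ∑ j : Fin n, ∑ k : Fin n, if j < k ∧ δ j = false ∧ δ k = true then 1 else 0

private def ON {n : ℕ} (δ : Fin n → Bool) : ℕ :=
  ∑ k : Fin n, if δ k = true then 1 else 0

private lemma NN_card {n : ℕ} (δ : Fin n → Bool) :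
    (Finset.univ.filter
      (fun p : Fin n × Fin n => p.1 < p.2 ∧ δ p.1 = false ∧ δ p.2 = true)).card
      = NN δ := by
  rw [card_filter, Fintype.sum_prod_type]
  rfl

private lemma NN_cons {n : ℕ} (b : Bool) (δ : Fin n → Bool) :
    NN (Fin.cons b δ) = NN δ + (if b = false then ON δ else 0) := by
  unfold NN ON
  rw [Fin.sum_univ_succ]
  have h0 : (∑ k : Fin (n+1), if (0 : Fin (n+1)) < k ∧ (Fin.cons b δ : Fin (n+1) → Bool) 0 = false ∧
      (Fin.cons b δ : Fin (n+1) → Bool) k = true then 1 else 0)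
      = (if b = false then ∑ k : Fin n, if δ k = true then 1 else 0 else 0) := by
    rw [Fin.sum_univ_succ]
    simp only [Fin.cons_zero, Fin.cons_succ, lt_self_iff_false, false_and, if_false,
      Fin.succ_pos, true_and, zero_add]
    cases b <;> simp
  rw [h0]
  have h1 : (∑ j : Fin n, ∑ k : Fin (n+1), if (Fin.succ j) < k ∧
      (Fin.cons b δ : Fin (n+1) → Bool) (Fin.succ j) = false ∧ (Fin.cons b δ : Fin (n+1) → Bool) k = true then 1 else 0)
      = ∑ j : Fin n, ∑ k : Fin n, if j < k ∧ δ j = false ∧ δ k = true then 1 else 0 := by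
    refine Finset.sum_congr rfl fun j _ => ?_
    rw [Fin.sum_univ_succ]
    simp [Fin.succ_lt_succ_iff]
  rw [h1]
  ring

private lemma ON_cons {n : ℕ} (b : Bool) (δ : Fin n → Bool) :
    ON (Fin.cons b δ) = ON δ + (if b = true then 1 else 0) := by
  unfold ON
  rw [Fin.sum_univ_succ]
  simp only [Fin.cons_zero, Fin.cons_succ]
  ring

private def f (n : ℕ) : ℤ := ∑ δ : Fin n → Bool, (-1 : ℤ) ^ (NN δ)

private def g (n : ℕ) : ℤ := ∑ δ : Fin n → Bool, (-1 : ℤ) ^ (NN δ + ON δ)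

private lemma sum_cons {n : ℕ} (F : (Fin (n+1) → Bool) → ℤ) :
    (∑ δ : Fin (n+1) → Bool, F δ)
      = ∑ b : Bool, ∑ δ : Fin n → Bool, F (Fin.cons b δ) := by
  rw [← (Fin.consEquiv (fun _ : Fin (n+1) => Bool)).sum_comp F, Fintype.sum_prod_type]
  rfl

private lemma f_succ (n : ℕ) : f (n + 1) = f n + g n := by
  unfold f g
  rw [sum_cons, Fintype.sum_bool]
  congr 1
  · refine Finset.sum_congr rfl fun δ _ => ?_
    rw [NN_cons]
    simp
  · refine Finset.sum_congr rfl fun δ _ => ?_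
    rw [NN_cons]
    simp

private lemma g_succ (n : ℕ) : g (n + 1) = f n - g n := by
  unfold f g
  rw [sum_cons, Fintype.sum_bool, sub_eq_neg_add]
  congr 1
  · rw [← Finset.sum_neg_distrib]
    refine Finset.sum_congr rfl fun δ _ => ?_
    rw [NN_cons, ON_cons]
    simp only [if_pos rfl, reduceIte, Bool.true_eq_false, add_zero]
    have h : NN δ + (ON δ + 1) = (NN δ + ON δ) + 1 := by ring
    rw [h, pow_succ, mul_neg_one]
  · refine Finset.sum_congr rfl fun δ _ => ?_
    rw [NN_cons, ON_cons]
    simp only [reduceIte, Bool.false_eq_true, add_zero]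
    have : NN δ + ON δ + ON δ = NN δ + (ON δ + ON δ) := by ring
    rw [this, pow_add, (Even.neg_one_pow ⟨ON δ, rfl⟩ : (-1:ℤ)^(ON δ + ON δ) = 1), mul_one]

private lemma f_zero : f 0 = 1 := by
  unfold f NN
  simp

private lemma g_zero : g 0 = 1 := by
  unfold g NN ON
  simp

private lemma main (m : ℕ) : f (2 * m + 1) = 2 ^ (m + 1) ∧ g (2 * m + 1) = 0 := by
  induction m with
  | zero => rw [f_succ, g_succ, f_zero, g_zero]; norm_num
  | succ k ih =>
    have h2 : 2 * (k + 1) + 1 = (2 * k + 1) + 1 + 1 := by ring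
    rw [h2, f_succ (2*k+1+1), g_succ (2*k+1+1), f_succ (2*k+1), g_succ (2*k+1), ih.1, ih.2]
    constructor <;> ring

/-- Albers–Frauenfelder–Solomon.  For `n = 2m+1` and
`δ ∈ {0,1}^n`, let `ε_δ` be the number (mod 2) of pairs `j < k` with `δ_j = 0` and
`δ_k = 1`.  Then `∑_{δ ∈ {0,1}^n} (-1)^{ε_δ} = 2^{m+1}`. -/
theorem stmt13 (m : ℕ) :
    (∑ δ : Fin (2 * m + 1) → Bool,
      (-1 : ℤ) ^ (Finset.univ.filter
        (fun p : Fin (2 * m + 1) × Fin (2 * m + 1) =>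
          p.1 < p.2 ∧ δ p.1 = false ∧ δ p.2 = true)).card) = 2 ^ (m + 1) := by
  have := (main m).1
  unfold f at this
  rw [← this]
  exact Finset.sum_congr rfl fun δ _ => by rw [NN_card]
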